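/- (Theorem 3.2, trajectory form.) Let n, m, l be positive integers, ε_{f0}, ε_f, ε_g ≥ 0, and P a symmetric positive definite real (n+m)×(n+m) matrix; set Sₓ := R₂ᵀPR₁, S_u := R₂ᵀPR₂. For each i ∈ {0, 1, …, l} let Āᵢ, ΔĀᵢ be real n×(n+m) matrices, K̄ᵢ real m×(n+m) matrices, C̄ᵢ ∈ ℝⁿ⁺ᵐ and ΔCᵢ ∈ ℝⁿ, with C̄₀ = 0, ΔC₀ = 0, ‖ΔĀ₀‖ ≤ ε_{f0}, and ‖ΔĀᵢ‖ ≤ ε_f, ‖ΔCᵢ‖ ≤ ε_g for i ∈ {1, …, l}; for each i ∈ {1, …, l} let Qᵢ be a real kᵢ×(n+m) matrix and fᵢ ∈ ℝ^{kᵢ}. Suppose there exist η₀ > 0 and ηᵢ₁, ηᵢ₂, ηᵢ₃ > 0 (i ∈ {1,…,l}) such that the LMI (25) of region 0 and the LMIs (24) of regions 1,…,l (with Λᵢ := P(R₁Āᵢ + R₂K̄ᵢ) + (R₁Āᵢ + R₂K̄ᵢ)ᵀP) are negative definite. Let x̄ : ℝ → ℝⁿ⁺ᵐ be differentiable and ι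 : ℝ → {0, 1, …, l} be such that for every t ≥ 0: x̄′(t) = (R₁Ā_{ι(t)} + R₂K̄_{ι(t)} + (R₁ − R₂S_u⁻¹Sₓ)ΔĀ_{ι(t)}) x̄(t) + C̄_{ι(t)} + (R₁ − R₂S_u⁻¹Sₓ)ΔC_{ι(t)}, and ι(t) ≠ 0 implies ‖Q_{ι(t)} x̄(t) + f_{ι(t)}‖ ≤ 1. Then for every t ≥ 0 with x̄(t) ≠ 0, the function t′ ↦ x̄(t′)ᵀPx̄(t′) is differentiable at t and its derivative at t is strictly negative. -/

import Mathlib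

open Matrix

/-- The block matrix `R₁ = [Iₙ; 0] : ℝ^{(n+m)×n}`. -/
def R1 (n m : ℕ) : Matrix (Fin n ⊕ Fin m) (Fin n) ℝ :=
  Matrix.of fun i j => if i = Sum.inl j then 1 else 0

/-- The block matrix `R₂ = [0; Iₘ] : ℝ^{(n+m)×m}`. -/
def R2 (n m : ℕ) : Matrix (Fin n ⊕ Fin m) (Fin m) ℝ :=
  Matrix.of fun i j => if i = Sum.inr j then 1 else 0

/-- Matrix–vector multiplication viewed as a map between Euclidean spaces
(so that `‖·‖` is the Euclidean norm). -/
def Matrix.mulVecE {ι κ : Type*} [Fintype κ] (M : Matrix ι κ ℝ)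
    (x : EuclideanSpace ℝ κ) : EuclideanSpace ℝ ι :=
  WithLp.toLp 2 (M.mulVec x)

/-!
Write `w = ΔĀ x̄` and let `u = S_u⁻¹ Sₓ w` be the equivalent control. Since `S_u u = R₂ᵀ P R₁ w`,
the vector `R₁ w - R₂ u` is `P`-orthogonal to `R₂ u`, which gives the Schur-complement bound
`uᵀ S_u u ≤ wᵀ R₁ᵀ P R₁ w`. Along the sliding motion `V̇ = 2 x̄ᵀ P x̄′`, and evaluating the quadratic
form of the active region's LMI at `(x̄, w, -u)` (at `(x̄, w, ΔC, 1, -u)` off region 0) bounds `V̇ / 2`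
by that negative value minus nonnegative terms: the S-procedure terms `η (ε² ‖x̄‖² - ‖w‖²)`,
`η₂ (ε_g² - ‖ΔC‖²)`, `η₃ (1 - ‖Q x̄ + f‖²)` and the Schur-complement gap.
-/

namespace Matrix

section CommSemiring

variable {ι κ α β R : Type*} [Fintype ι] [Fintype κ] [Fintype α] [Fintype β] [CommSemiring R]

lemma mulVec_dotProduct_mulVec_mulVec (A : Matrix ι α R) (B : Matrix ι β R) (P : Matrix ι ι R)
    (u : α → R) (w : β → R) :
    (A *ᵥ u) ⬝ᵥ P *ᵥ (B *ᵥ w) = u ⬝ᵥ (Aᵀ * P * B) *ᵥ w := by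
  rw [← mulVec_mulVec, ← mulVec_mulVec, dotProduct_transpose_mulVec, dotProduct_comm]

lemma IsSymm.dotProduct_mulVec_comm {P : Matrix ι ι R} (hP : P.IsSymm) (u w : ι → R) :
    u ⬝ᵥ P *ᵥ w = w ⬝ᵥ P *ᵥ u := by
  rw [← dotProduct_transpose_mulVec, hP.eq]

lemma IsSymm.dotProduct_mul_add_transpose_mul_mulVec {P : Matrix ι ι R} (hP : P.IsSymm)
    (A : Matrix ι ι R) (x : ι → R) :
    x ⬝ᵥ (P * A + Aᵀ * P) *ᵥ x = 2 * (x ⬝ᵥ P *ᵥ (A *ᵥ x)) := by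
  rw [add_mulVec, dotProduct_add, ← mulVec_mulVec, ← mulVec_mulVec, dotProduct_transpose_mulVec,
    dotProduct_comm (P *ᵥ x), hP.dotProduct_mulVec_comm (A *ᵥ x), two_mul]

lemma dotProduct_self_mulVec_add (Q : Matrix κ ι R) (x : ι → R) (f : κ → R) :
    (Q *ᵥ x + f) ⬝ᵥ (Q *ᵥ x + f) = x ⬝ᵥ (Qᵀ * Q) *ᵥ x + 2 * (x ⬝ᵥ Qᵀ *ᵥ f) + f ⬝ᵥ f := by
  rw [← mulVec_mulVec, dotProduct_transpose_mulVec, dotProduct_transpose_mulVec, add_dotProduct,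
    dotProduct_add, dotProduct_add, dotProduct_comm f]
  ring

end CommSemiring

lemma PosSemidef.isSymm {ι : Type*} {P : Matrix ι ι ℝ} (hP : P.PosSemidef) : P.IsSymm :=
  isHermitian_iff_isSymm.mp hP.isHermitian

variable {ι α β : Type*} [Fintype ι] [Fintype α] [Fintype β] {P : Matrix ι ι ℝ}

lemma PosSemidef.dotProduct_mulVec_le_of_dotProduct_mulVec_eq (hP : P.PosSemidef)
    {y z : ι → ℝ} (h : y ⬝ᵥ P *ᵥ z = z ⬝ᵥ P *ᵥ z) :
    z ⬝ᵥ P *ᵥ z ≤ y ⬝ᵥ P *ᵥ y := by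
  have hsymm := hP.isSymm.dotProduct_mulVec_comm z y
  have hnonneg : 0 ≤ (y - z) ⬝ᵥ P *ᵥ (y - z) := by
    simpa using hP.dotProduct_mulVec_nonneg (y - z)
  simp only [mulVec_sub, dotProduct_sub, sub_dotProduct] at hnonneg
  linarith

lemma PosSemidef.dotProduct_mulVec_add_le (hP : P.PosSemidef) (y z : ι → ℝ) :
    (y + z) ⬝ᵥ P *ᵥ (y + z) ≤ 2 * (y ⬝ᵥ P *ᵥ y + z ⬝ᵥ P *ᵥ z) := by
  have hnonneg : 0 ≤ (y - z) ⬝ᵥ P *ᵥ (y - z) := by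
    simpa using hP.dotProduct_mulVec_nonneg (y - z)
  simp only [mulVec_add, mulVec_sub, dotProduct_add, dotProduct_sub, add_dotProduct,
    sub_dotProduct] at hnonneg ⊢
  linarith

lemma PosSemidef.dotProduct_mulVec_le_of_mulVec_eq (hP : P.PosSemidef)
    {R₁ : Matrix ι α ℝ} {R₂ : Matrix ι β ℝ} {w : α → ℝ} {u : β → ℝ}
    (hu : (R₂ᵀ * P * R₂) *ᵥ u = (R₂ᵀ * P * R₁) *ᵥ w) :
    u ⬝ᵥ (R₂ᵀ * P * R₂) *ᵥ u ≤ w ⬝ᵥ (R₁ᵀ * P * R₁) *ᵥ w := by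
  rw [← mulVec_dotProduct_mulVec_mulVec, ← mulVec_dotProduct_mulVec_mulVec]
  refine hP.dotProduct_mulVec_le_of_dotProduct_mulVec_eq ?_
  rw [hP.isSymm.dotProduct_mulVec_comm, mulVec_dotProduct_mulVec_mulVec,
    mulVec_dotProduct_mulVec_mulVec, hu]

end Matrix

namespace EuclideanSpace

variable {ι : Type*} [Fintype ι]

lemma dotProduct_self_eq_norm_sq (z : EuclideanSpace ℝ ι) : z.ofLp ⬝ᵥ z.ofLp = ‖z‖ ^ 2 := by
  rw [← real_inner_self_eq_norm_sq, inner_eq_star_dotProduct, star_trivial]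

lemma dotProduct_self_le_of_norm_le {z : EuclideanSpace ℝ ι} {r : ℝ} (h : ‖z‖ ≤ r) :
    z.ofLp ⬝ᵥ z.ofLp ≤ r ^ 2 := by
  rw [dotProduct_self_eq_norm_sq]
  exact pow_le_pow_left₀ (norm_nonneg z) h 2

end EuclideanSpace

lemma Matrix.dotProduct_mulVec_self_le_of_norm_mulVecE_le {ι κ : Type*} [Fintype ι] [Fintype κ]
    {A : Matrix κ ι ℝ} {z : EuclideanSpace ℝ ι} {ε : ℝ} (h : ‖A.mulVecE z‖ ≤ ε * ‖z‖) :
    (A *ᵥ z.ofLp) ⬝ᵥ (A *ᵥ z.ofLp) ≤ ε ^ 2 * (z.ofLp ⬝ᵥ z.ofLp) := by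
  have hsq := EuclideanSpace.dotProduct_self_le_of_norm_le h
  rwa [mul_pow, ← EuclideanSpace.dotProduct_self_eq_norm_sq] at hsq

lemma HasDerivAt.dotProduct_mulVec_self {ι : Type*} [Fintype ι] [DecidableEq ι]
    {P : Matrix ι ι ℝ} (hP : P.IsSymm) {x : ℝ → EuclideanSpace ℝ ι} {v : EuclideanSpace ℝ ι}
    {t : ℝ} (hx : HasDerivAt x v t) :
    HasDerivAt (fun s => (x s).ofLp ⬝ᵥ P *ᵥ (x s).ofLp) (2 * ((x t).ofLp ⬝ᵥ P *ᵥ v.ofLp)) t := by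
  have h := hx.inner ℝ ((toEuclideanCLM (𝕜 := ℝ) P).hasFDerivAt.comp_hasDerivAt t hx)
  simp only [Function.comp_apply, inner_toEuclideanCLM] at h
  rwa [hP.dotProduct_mulVec_comm v, ← two_mul] at h

lemma R2_mulVec_injective (n m : ℕ) : Function.Injective (R2 n m).mulVec := by
  intro z z' h
  funext j
  simpa [R2, mulVec, dotProduct] using congrFun h (Sum.inr j)

lemma Matrix.PosDef.isUnit_det_R2_transpose_mul_mul_R2 {n m : ℕ}
    {P : Matrix (Fin n ⊕ Fin m) (Fin n ⊕ Fin m) ℝ} (hP : P.PosDef) :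
    IsUnit ((R2 n m)ᵀ * P * R2 n m).det := by
  have hSu := hP.conjTranspose_mul_mul_same (R2_mulVec_injective n m)
  rw [conjTranspose_eq_transpose_of_trivial] at hSu
  exact (isUnit_iff_isUnit_det _).mp hSu.isUnit

section SlidingMotion

variable {ι α β : Type*} [Fintype ι] [Fintype α] [Fintype β] [DecidableEq β]
  {P A Λ : Matrix ι ι ℝ} {R₁ : Matrix ι α ℝ} {R₂ : Matrix ι β ℝ}
  {Sx : Matrix β α ℝ} {Su : Matrix β β ℝ} {ΔA : Matrix α ι ℝ} {x : ι → ℝ}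

lemma dotProduct_equivalentControl_le (hP : P.PosSemidef) (hSx : Sx = R₂ᵀ * P * R₁)
    (hSu : Su = R₂ᵀ * P * R₂) (hdet : IsUnit Su.det) (w : α → ℝ) :
    ((Su⁻¹ * Sx) *ᵥ w) ⬝ᵥ Su *ᵥ ((Su⁻¹ * Sx) *ᵥ w) ≤ w ⬝ᵥ (R₁ᵀ * P * R₁) *ᵥ w := by
  subst hSx hSu
  refine hP.dotProduct_mulVec_le_of_mulVec_eq ?_
  rw [mulVec_mulVec, mul_nonsing_inv_cancel_left _ _ hdet]

lemma dotProduct_mulVec_slidingVelocity_neg_of_lmi_region_zero [DecidableEq ι] [DecidableEq α]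
    (hP : P.PosSemidef) (hSx : Sx = R₂ᵀ * P * R₁) (hSu : Su = R₂ᵀ * P * R₂) (hdet : IsUnit Su.det)
    (hΛ : Λ = P * A + Aᵀ * P) {ε η : ℝ} (hη : 0 ≤ η)
    (hLMI : ∀ (z₀ : ι → ℝ) (z₁ : α → ℝ) (z₂ : β → ℝ), ¬(z₀ = 0 ∧ z₁ = 0 ∧ z₂ = 0) →
      z₀ ⬝ᵥ (Λ + (η * ε ^ 2) • (1 : Matrix ι ι ℝ)) *ᵥ z₀
        + 2 * (z₀ ⬝ᵥ (P * R₁) *ᵥ z₁)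
        + 2 * (z₀ ⬝ᵥ (P * R₂) *ᵥ z₂)
        + z₁ ⬝ᵥ (R₁ᵀ * P * R₁ - η • (1 : Matrix α α ℝ)) *ᵥ z₁
        - z₂ ⬝ᵥ (R₂ᵀ * P * R₂) *ᵥ z₂ < 0)
    (hx : x ≠ 0) (hΔA : (ΔA *ᵥ x) ⬝ᵥ (ΔA *ᵥ x) ≤ ε ^ 2 * (x ⬝ᵥ x)) :
    x ⬝ᵥ P *ᵥ ((A + (R₁ - R₂ * Su⁻¹ * Sx) * ΔA) *ᵥ x) < 0 := by
  have hΛx := hΛ ▸ hP.isSymm.dotProduct_mul_add_transpose_mul_mulVec A x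
  have hu := dotProduct_equivalentControl_le hP hSx hSu hdet (ΔA *ᵥ x)
  have hlmi := hLMI x (ΔA *ᵥ x) (-((Su⁻¹ * Sx) *ᵥ (ΔA *ᵥ x))) fun h => hx h.1
  have hS := mul_nonneg hη (sub_nonneg.mpr hΔA)
  rw [← hSu] at hlmi
  simp only [add_mulVec, sub_mulVec, smul_mulVec, one_mulVec, mulVec_add, mulVec_sub, mulVec_neg,
    dotProduct_add, dotProduct_sub, dotProduct_neg, neg_dotProduct, neg_neg, dotProduct_smul,
    smul_eq_mul, ← mulVec_mulVec] at hlmi hΛx hu ⊢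
  linarith

lemma dotProduct_mulVec_slidingVelocity_neg_of_lmi_region [DecidableEq ι] [DecidableEq α]
    (hP : P.PosSemidef) (hSx : Sx = R₂ᵀ * P * R₁) (hSu : Su = R₂ᵀ * P * R₂) (hdet : IsUnit Su.det)
    (hΛ : Λ = P * A + Aᵀ * P) {κ : Type*} [Fintype κ] {Q : Matrix κ ι ℝ} {f : κ → ℝ}
    {C : ι → ℝ} {c : α → ℝ} {εf εg η₁ η₂ η₃ : ℝ} (hη₁ : 0 ≤ η₁) (hη₂ : 0 ≤ η₂) (hη₃ : 0 ≤ η₃)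
    (hLMI : ∀ (z₀ : ι → ℝ) (z₁ z₂ : α → ℝ) (z₃ : ℝ) (z₄ : β → ℝ),
      ¬(z₀ = 0 ∧ z₁ = 0 ∧ z₂ = 0 ∧ z₃ = 0 ∧ z₄ = 0) →
      z₀ ⬝ᵥ (Λ + (η₁ * εf ^ 2) • (1 : Matrix ι ι ℝ) - η₃ • (Qᵀ * Q)) *ᵥ z₀
        + 2 * (z₀ ⬝ᵥ (P * R₁) *ᵥ z₁)
        + 2 * (z₀ ⬝ᵥ (P * R₁) *ᵥ z₂)
        + 2 * z₃ * (z₀ ⬝ᵥ (P *ᵥ C - η₃ • Qᵀ *ᵥ f))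
        + 2 * (z₀ ⬝ᵥ (P * R₂) *ᵥ z₄)
        + z₁ ⬝ᵥ (R₁ᵀ * P * R₁ - η₁ • (1 : Matrix α α ℝ)) *ᵥ z₁
        + z₂ ⬝ᵥ (R₁ᵀ * P * R₁ - η₂ • (1 : Matrix α α ℝ)) *ᵥ z₂
        + (η₂ * εg ^ 2 - η₃ * (f ⬝ᵥ f - 1)) * z₃ ^ 2
        - (1 / 2) * (z₄ ⬝ᵥ (R₂ᵀ * P * R₂) *ᵥ z₄) < 0)
    (hx : x ≠ 0) (hΔA : (ΔA *ᵥ x) ⬝ᵥ (ΔA *ᵥ x) ≤ εf ^ 2 * (x ⬝ᵥ x)) (hc : c ⬝ᵥ c ≤ εg ^ 2)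
    (hQ : (Q *ᵥ x + f) ⬝ᵥ (Q *ᵥ x + f) ≤ 1) :
    x ⬝ᵥ P *ᵥ ((A + (R₁ - R₂ * Su⁻¹ * Sx) * ΔA) *ᵥ x + C + (R₁ - R₂ * Su⁻¹ * Sx) *ᵥ c) < 0 := by
  have hΛx := hΛ ▸ hP.isSymm.dotProduct_mul_add_transpose_mul_mulVec A x
  have hW : (R₁ᵀ * P * R₁).PosSemidef := by
    simpa only [conjTranspose_eq_transpose_of_trivial] using hP.conjTranspose_mul_mul_same R₁
  -- the factor `1 / 2` in front of `S_u` in the LMI absorbs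
  -- `(w + c)ᵀ W (w + c) ≤ 2 (wᵀ W w + cᵀ W c)`
  have hu := (dotProduct_equivalentControl_le hP hSx hSu hdet (ΔA *ᵥ x + c)).trans
    (hW.dotProduct_mulVec_add_le (ΔA *ᵥ x) c)
  have hlmi := hLMI x (ΔA *ᵥ x) c 1 (-((Su⁻¹ * Sx) *ᵥ (ΔA *ᵥ x + c))) fun h => hx h.1
  have h₁ := mul_nonneg hη₁ (sub_nonneg.mpr hΔA)
  have h₂ := mul_nonneg hη₂ (sub_nonneg.mpr hc)
  have h₃ := mul_nonneg hη₃ (sub_nonneg.mpr hQ)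
  rw [dotProduct_self_mulVec_add] at h₃
  rw [← hSu] at hlmi
  simp only [add_mulVec, sub_mulVec, smul_mulVec, one_mulVec, mulVec_add, mulVec_sub, mulVec_neg,
    dotProduct_add, dotProduct_sub, dotProduct_neg, neg_dotProduct, dotProduct_smul,
    smul_eq_mul, one_pow, mul_one, ← mulVec_mulVec] at hlmi hΛx hu h₃ ⊢
  linarith

end SlidingMotion

theorem theorem_3_2_sliding_motion_lyapunov_decrease_general
    (n m l : ℕ)
    (εf0 εf εg : ℝ)
    (P : Matrix (Fin n ⊕ Fin m) (Fin n ⊕ Fin m) ℝ) (hP : P.PosDef)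
    (Sx : Matrix (Fin m) (Fin n) ℝ) (hSx : Sx = (R2 n m)ᵀ * P * R1 n m)
    (Su : Matrix (Fin m) (Fin m) ℝ) (hSu : Su = (R2 n m)ᵀ * P * R2 n m)
    (Abar ΔA : Fin (l + 1) → Matrix (Fin n) (Fin n ⊕ Fin m) ℝ)
    (Kbar : Fin (l + 1) → Matrix (Fin m) (Fin n ⊕ Fin m) ℝ)
    (Cbar : Fin (l + 1) → EuclideanSpace ℝ (Fin n ⊕ Fin m))
    (ΔC : Fin (l + 1) → EuclideanSpace ℝ (Fin n))
    (hCbar0 : Cbar 0 = 0) (hΔC0 : ΔC 0 = 0)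
    (hΔA0 : ∀ z : EuclideanSpace ℝ (Fin n ⊕ Fin m), ‖(ΔA 0).mulVecE z‖ ≤ εf0 * ‖z‖)
    (hΔAi : ∀ i : Fin (l + 1), i ≠ 0 →
      ∀ z : EuclideanSpace ℝ (Fin n ⊕ Fin m), ‖(ΔA i).mulVecE z‖ ≤ εf * ‖z‖)
    (hΔCi : ∀ i : Fin (l + 1), i ≠ 0 → ‖ΔC i‖ ≤ εg)
    (k : Fin (l + 1) → ℕ)
    (Q : ∀ i : Fin (l + 1), Matrix (Fin (k i)) (Fin n ⊕ Fin m) ℝ)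
    (f : ∀ i : Fin (l + 1), EuclideanSpace ℝ (Fin (k i)))
    (η₀ : ℝ) (hη₀ : 0 < η₀)
    (η₁ η₂ η₃ : Fin (l + 1) → ℝ)
    (hη : ∀ i : Fin (l + 1), i ≠ 0 → 0 < η₁ i ∧ 0 < η₂ i ∧ 0 < η₃ i)
    (Λ : Fin (l + 1) → Matrix (Fin n ⊕ Fin m) (Fin n ⊕ Fin m) ℝ)
    (hΛ : ∀ i, Λ i = P * (R1 n m * Abar i + R2 n m * Kbar i)
      + (R1 n m * Abar i + R2 n m * Kbar i)ᵀ * P)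
    (hLMI0 : ∀ (z₀ : Fin n ⊕ Fin m → ℝ) (z₁ : Fin n → ℝ) (z₂ : Fin m → ℝ),
      ¬(z₀ = 0 ∧ z₁ = 0 ∧ z₂ = 0) →
      z₀ ⬝ᵥ (Λ 0 + (η₀ * εf0 ^ 2) • (1 : Matrix (Fin n ⊕ Fin m) (Fin n ⊕ Fin m) ℝ)).mulVec z₀
        + 2 * (z₀ ⬝ᵥ (P * R1 n m).mulVec z₁)
        + 2 * (z₀ ⬝ᵥ (P * R2 n m).mulVec z₂)
        + z₁ ⬝ᵥ ((R1 n m)ᵀ * P * R1 n m - η₀ • (1 : Matrix (Fin n) (Fin n) ℝ)).mulVec z₁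
        - z₂ ⬝ᵥ ((R2 n m)ᵀ * P * R2 n m).mulVec z₂ < 0)
    (hLMIi : ∀ i : Fin (l + 1), i ≠ 0 →
      ∀ (z₀ : Fin n ⊕ Fin m → ℝ) (z₁ z₂ : Fin n → ℝ) (z₃ : ℝ) (z₄ : Fin m → ℝ),
      ¬(z₀ = 0 ∧ z₁ = 0 ∧ z₂ = 0 ∧ z₃ = 0 ∧ z₄ = 0) →
      z₀ ⬝ᵥ (Λ i + (η₁ i * εf ^ 2) • (1 : Matrix (Fin n ⊕ Fin m) (Fin n ⊕ Fin m) ℝ)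
            - η₃ i • ((Q i)ᵀ * Q i)).mulVec z₀
        + 2 * (z₀ ⬝ᵥ (P * R1 n m).mulVec z₁)
        + 2 * (z₀ ⬝ᵥ (P * R1 n m).mulVec z₂)
        + 2 * z₃ * (z₀ ⬝ᵥ (P.mulVec (Cbar i) - η₃ i • (Q i)ᵀ.mulVec (f i)))
        + 2 * (z₀ ⬝ᵥ (P * R2 n m).mulVec z₄)
        + z₁ ⬝ᵥ ((R1 n m)ᵀ * P * R1 n m - η₁ i • (1 : Matrix (Fin n) (Fin n) ℝ)).mulVec z₁
        + z₂ ⬝ᵥ ((R1 n m)ᵀ * P * R1 n m - η₂ i • (1 : Matrix (Fin n) (Fin n) ℝ)).mulVec z₂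
        + (η₂ i * εg ^ 2 - η₃ i * (f i ⬝ᵥ f i - 1)) * z₃ ^ 2
        - (1 / 2) * (z₄ ⬝ᵥ ((R2 n m)ᵀ * P * R2 n m).mulVec z₄) < 0)
    (xbar : ℝ → EuclideanSpace ℝ (Fin n ⊕ Fin m)) (ι : ℝ → Fin (l + 1))
    (hode : ∀ t ≥ (0 : ℝ), HasDerivAt xbar
      ((R1 n m * Abar (ι t) + R2 n m * Kbar (ι t)
          + (R1 n m - R2 n m * Su⁻¹ * Sx) * ΔA (ι t)).mulVecE (xbar t)
        + Cbar (ι t)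
        + (R1 n m - R2 n m * Su⁻¹ * Sx).mulVecE (ΔC (ι t))) t)
    (hreg : ∀ t ≥ (0 : ℝ), ι t ≠ 0 →
      ‖(Q (ι t)).mulVecE (xbar t) + f (ι t)‖ ≤ 1) :
    ∀ t ≥ (0 : ℝ), xbar t ≠ 0 →
      ∃ dV : ℝ, HasDerivAt (fun t' => xbar t' ⬝ᵥ P.mulVec (xbar t')) dV t ∧ dV < 0 := by
  intro t ht hx
  have hx' : (xbar t).ofLp ≠ 0 := by simpa using hx
  have hdet : IsUnit Su.det := hSu ▸ hP.isUnit_det_R2_transpose_mul_mul_R2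
  refine ⟨_, (hode t ht).dotProduct_mulVec_self hP.posSemidef.isSymm, ?_⟩
  simp only [Matrix.mulVecE, WithLp.ofLp_add]
  refine mul_neg_of_pos_of_neg two_pos ?_
  rcases eq_or_ne (ι t) 0 with hi | hi
  · simp only [hi, hCbar0, hΔC0, WithLp.ofLp_zero, mulVec_zero, add_zero]
    exact dotProduct_mulVec_slidingVelocity_neg_of_lmi_region_zero hP.posSemidef hSx hSu hdet
      (hΛ 0) hη₀.le hLMI0 hx' (dotProduct_mulVec_self_le_of_norm_mulVecE_le (hΔA0 (xbar t)))
  · obtain ⟨hη₁, hη₂, hη₃⟩ := hη (ι t) hi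
    refine dotProduct_mulVec_slidingVelocity_neg_of_lmi_region hP.posSemidef hSx hSu hdet (hΛ _)
      hη₁.le hη₂.le hη₃.le (hLMIi _ hi) hx'
      (dotProduct_mulVec_self_le_of_norm_mulVecE_le (hΔAi _ hi (xbar t)))
      (EuclideanSpace.dotProduct_self_le_of_norm_le (hΔCi _ hi)) ?_
    simpa only [Matrix.mulVecE, WithLp.ofLp_add, WithLp.ofLp_toLp, one_pow] using
      EuclideanSpace.dotProduct_self_le_of_norm_le (hreg t ht hi)

/-- Theorem 3.2 of the paper, trajectory form.  Under the LMIs (25)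
(region 0) and (24) (regions 1,…,l) — negative definiteness of a symmetric block matrix
being expressed, as in the paper, via its quadratic form `zᵀMz < 0` for `z ≠ 0` — and
the induced-ℓ²-norm uncertainty bounds `‖ΔĀ₀‖ ≤ ε_{f0}`, `‖ΔĀᵢ‖ ≤ ε_f`, `‖ΔCᵢ‖ ≤ ε_g`
(a matrix bound `‖M‖ ≤ ε` in the induced ℓ² operator norm being expressed as
`‖Mz‖ ≤ ε‖z‖` for all `z`, with Euclidean vector norms), every trajectory of the
sliding motion `x̄′ = (R₁Ā_ι + R₂K̄_ι + (R₁ − R₂S_u⁻¹Sₓ)ΔĀ_ι)x̄ + C̄_ι +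
(R₁ − R₂S_u⁻¹Sₓ)ΔC_ι` staying in the active regions makes `V(x̄) = x̄ᵀPx̄`
differentiable with strictly negative derivative whenever `x̄(t) ≠ 0`. -/
theorem theorem_3_2_sliding_motion_lyapunov_decrease
    (n m l : ℕ) (hn : 0 < n) (hm : 0 < m) (hl : 0 < l)
    (εf0 εf εg : ℝ) (hεf0 : 0 ≤ εf0) (hεf : 0 ≤ εf) (hεg : 0 ≤ εg)
    (P : Matrix (Fin n ⊕ Fin m) (Fin n ⊕ Fin m) ℝ) (hP : P.PosDef)
    (Sx : Matrix (Fin m) (Fin n) ℝ) (hSx : Sx = (R2 n m)ᵀ * P * R1 n m)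
    (Su : Matrix (Fin m) (Fin m) ℝ) (hSu : Su = (R2 n m)ᵀ * P * R2 n m)
    (Abar ΔA : Fin (l + 1) → Matrix (Fin n) (Fin n ⊕ Fin m) ℝ)
    (Kbar : Fin (l + 1) → Matrix (Fin m) (Fin n ⊕ Fin m) ℝ)
    (Cbar : Fin (l + 1) → EuclideanSpace ℝ (Fin n ⊕ Fin m))
    (ΔC : Fin (l + 1) → EuclideanSpace ℝ (Fin n))
    (hCbar0 : Cbar 0 = 0) (hΔC0 : ΔC 0 = 0)
    (hΔA0 : ∀ z : EuclideanSpace ℝ (Fin n ⊕ Fin m), ‖(ΔA 0).mulVecE z‖ ≤ εf0 * ‖z‖)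
    (hΔAi : ∀ i : Fin (l + 1), i ≠ 0 →
      ∀ z : EuclideanSpace ℝ (Fin n ⊕ Fin m), ‖(ΔA i).mulVecE z‖ ≤ εf * ‖z‖)
    (hΔCi : ∀ i : Fin (l + 1), i ≠ 0 → ‖ΔC i‖ ≤ εg)
    (k : Fin (l + 1) → ℕ)
    (Q : ∀ i : Fin (l + 1), Matrix (Fin (k i)) (Fin n ⊕ Fin m) ℝ)
    (f : ∀ i : Fin (l + 1), EuclideanSpace ℝ (Fin (k i)))
    (η₀ : ℝ) (hη₀ : 0 < η₀)
    (η₁ η₂ η₃ : Fin (l + 1) → ℝ)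
    (hη : ∀ i : Fin (l + 1), i ≠ 0 → 0 < η₁ i ∧ 0 < η₂ i ∧ 0 < η₃ i)
    (Λ : Fin (l + 1) → Matrix (Fin n ⊕ Fin m) (Fin n ⊕ Fin m) ℝ)
    (hΛ : ∀ i, Λ i = P * (R1 n m * Abar i + R2 n m * Kbar i)
      + (R1 n m * Abar i + R2 n m * Kbar i)ᵀ * P)
    (hLMI0 : ∀ (z₀ : Fin n ⊕ Fin m → ℝ) (z₁ : Fin n → ℝ) (z₂ : Fin m → ℝ),
      ¬(z₀ = 0 ∧ z₁ = 0 ∧ z₂ = 0) →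
      z₀ ⬝ᵥ (Λ 0 + (η₀ * εf0 ^ 2) • (1 : Matrix (Fin n ⊕ Fin m) (Fin n ⊕ Fin m) ℝ)).mulVec z₀
        + 2 * (z₀ ⬝ᵥ (P * R1 n m).mulVec z₁)
        + 2 * (z₀ ⬝ᵥ (P * R2 n m).mulVec z₂)
        + z₁ ⬝ᵥ ((R1 n m)ᵀ * P * R1 n m - η₀ • (1 : Matrix (Fin n) (Fin n) ℝ)).mulVec z₁
        - z₂ ⬝ᵥ ((R2 n m)ᵀ * P * R2 n m).mulVec z₂ < 0)
    (hLMIi : ∀ i : Fin (l + 1), i ≠ 0 →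
      ∀ (z₀ : Fin n ⊕ Fin m → ℝ) (z₁ z₂ : Fin n → ℝ) (z₃ : ℝ) (z₄ : Fin m → ℝ),
      ¬(z₀ = 0 ∧ z₁ = 0 ∧ z₂ = 0 ∧ z₃ = 0 ∧ z₄ = 0) →
      z₀ ⬝ᵥ (Λ i + (η₁ i * εf ^ 2) • (1 : Matrix (Fin n ⊕ Fin m) (Fin n ⊕ Fin m) ℝ)
            - η₃ i • ((Q i)ᵀ * Q i)).mulVec z₀
        + 2 * (z₀ ⬝ᵥ (P * R1 n m).mulVec z₁)
        + 2 * (z₀ ⬝ᵥ (P * R1 n m).mulVec z₂)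
        + 2 * z₃ * (z₀ ⬝ᵥ (P.mulVec (Cbar i) - η₃ i • (Q i)ᵀ.mulVec (f i)))
        + 2 * (z₀ ⬝ᵥ (P * R2 n m).mulVec z₄)
        + z₁ ⬝ᵥ ((R1 n m)ᵀ * P * R1 n m - η₁ i • (1 : Matrix (Fin n) (Fin n) ℝ)).mulVec z₁
        + z₂ ⬝ᵥ ((R1 n m)ᵀ * P * R1 n m - η₂ i • (1 : Matrix (Fin n) (Fin n) ℝ)).mulVec z₂
        + (η₂ i * εg ^ 2 - η₃ i * (f i ⬝ᵥ f i - 1)) * z₃ ^ 2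
        - (1 / 2) * (z₄ ⬝ᵥ ((R2 n m)ᵀ * P * R2 n m).mulVec z₄) < 0)
    (xbar : ℝ → EuclideanSpace ℝ (Fin n ⊕ Fin m)) (ι : ℝ → Fin (l + 1))
    (hdiff : Differentiable ℝ xbar)
    (hode : ∀ t ≥ (0 : ℝ), HasDerivAt xbar
      ((R1 n m * Abar (ι t) + R2 n m * Kbar (ι t)
          + (R1 n m - R2 n m * Su⁻¹ * Sx) * ΔA (ι t)).mulVecE (xbar t)
        + Cbar (ι t)
        + (R1 n m - R2 n m * Su⁻¹ * Sx).mulVecE (ΔC (ι t))) t)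
    (hreg : ∀ t ≥ (0 : ℝ), ι t ≠ 0 →
      ‖(Q (ι t)).mulVecE (xbar t) + f (ι t)‖ ≤ 1) :
    ∀ t ≥ (0 : ℝ), xbar t ≠ 0 →
      ∃ dV : ℝ, HasDerivAt (fun t' => xbar t' ⬝ᵥ P.mulVec (xbar t')) dV t ∧ dV < 0 :=
  theorem_3_2_sliding_motion_lyapunov_decrease_general n m l εf0 εf εg P hP Sx hSx Su hSu Abar ΔA
    Kbar Cbar ΔC hCbar0 hΔC0 hΔA0 hΔAi hΔCi k Q f η₀ hη₀ η₁ η₂ η₃ hη Λ hΛ hLMI0 hLMIi xbar ι hode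
    hreg
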